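/- Let b ≥ 2, h ≥ 1 and a be integers with 0 ≤ a < b^h, let r be an integer with 0 ≤ r < h, let J be a finite set of n non-negative integers all congruent to r modulo h, and let ε > 0. Then μ({x ∈ (0,1) : |Σ_{j ∈ J} (1_{[a·b^{−h}, (a+1)·b^{−h})}({b^j x}) − b^{−h})| > ε·√n}) ≤ 2·exp(−ε² / (2·b^{−h}(1 − b^{−h}) + (2/3)·ε·n^{−1/2})). -/

import Mathlib

/-!
Write `p = b⁻ʰ`. Indices congruent modulo `h` lie at least `h` apart, so the indicators
`1_{[a b⁻ʰ, (a+1) b⁻ʰ)}({bʲ x})` read disjoint blocks of base-`b` digits of `x` and behave like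
independent Bernoulli(`p`) variables. Precisely, `x ↦ {bᵐ x}` preserves Lebesgue measure on
`[0, 1]`, so the smallest index may be taken to be `0`; cutting `[0, 1]` into the `bʰ` intervals on
which that first block is constant and rescaling each onto `[0, 1]` peels off one factor, and
`∫₀¹ exp (t ∑ⱼ 1ⱼ) = (p eᵗ + 1 - p)ⁿ`. The centred Bernoulli moment generating function is at most
`exp (p (1 - p) (e^|t| - 1 - |t|)) ≤ exp (p (1 - p) t² / (2 (1 - |t|/3)))`, and the Chernoff bound
at `t = λ / (n p (1 - p) + λ/3)`, `λ = ε √n`, gives Bernstein's inequality for each tail.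
-/

open MeasureTheory ProbabilityTheory Real Set
open scoped Finset Nat

theorem hasSum_exp_sub_one_sub (x : ℝ) :
    HasSum (fun k => x ^ (k + 2) / (k + 2)!) (exp x - 1 - x) := by
  have := (hasSum_nat_add_iff' 2).mpr
    (Real.exp_eq_exp_ℝ ▸ NormedSpace.expSeries_div_hasSum_exp x)
  simpa [Finset.sum_range_succ, sub_sub] using this

theorem exp_mul_sub_one_sub_le (t : ℝ) {y : ℝ} (hy : |y| ≤ 1) :
    exp (y * t) - 1 - y * t ≤ y ^ 2 * (exp |t| - 1 - |t|) := by
  refine hasSum_le (fun k => ?_) (hasSum_exp_sub_one_sub (y * t))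
    ((hasSum_exp_sub_one_sub |t|).mul_left (y ^ 2))
  have hyk : |y| ^ k ≤ 1 := pow_le_one₀ (abs_nonneg y) hy
  calc (y * t) ^ (k + 2) / (k + 2)! ≤ |y * t| ^ (k + 2) / (k + 2)! := by
        gcongr ?_ / _; exact (le_abs_self _).trans_eq (abs_pow _ _)
    _ = y ^ 2 * (|y| ^ k * (|t| ^ (k + 2) / (k + 2)!)) := by
        rw [abs_mul, mul_pow, pow_add |y|, sq_abs]; ring
    _ ≤ y ^ 2 * (|t| ^ (k + 2) / (k + 2)!) := by
        gcongr; exact mul_le_of_le_one_left (by positivity) hyk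

theorem exp_sub_one_sub_le {t : ℝ} (ht0 : 0 ≤ t) (ht3 : t < 3) :
    exp t - 1 - t ≤ t ^ 2 / (2 * (1 - t / 3)) := by
  have hgeom := (hasSum_geometric_of_lt_one (by positivity) (by linarith : t / 3 < 1)).mul_left
    (t ^ 2 / 2)
  rw [← div_eq_mul_inv, div_div] at hgeom
  refine hasSum_le (fun k => ?_) (hasSum_exp_sub_one_sub t) hgeom
  have hfac : ((2 * 3 ^ k : ℕ) : ℝ) ≤ (k + 2)! := by
    exact_mod_cast (add_comm k 2 ▸ Nat.factorial_mul_pow_le_factorial : 2 ! * 3 ^ k ≤ (k + 2)!)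
  push_cast at hfac
  rw [div_le_iff₀ (by positivity)]
  calc t ^ (k + 2) = t ^ 2 / 2 * (t / 3) ^ k * (2 * 3 ^ k) := by rw [div_pow]; field_simp; ring
    _ ≤ _ := by gcongr

theorem centered_bernoulli_mgf_le {p : ℝ} (hp0 : 0 ≤ p) (hp1 : p ≤ 1) (t : ℝ) :
    (1 - p) * exp (-p * t) + p * exp ((1 - p) * t) ≤ exp (p * (1 - p) * (exp |t| - 1 - |t|)) := by
  have hq : 0 ≤ 1 - p := by linarith
  have h₁ := exp_mul_sub_one_sub_le t (y := -p) (by rw [abs_neg, abs_of_nonneg hp0]; exact hp1)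
  have h₂ := exp_mul_sub_one_sub_le t (y := 1 - p) (by rw [abs_of_nonneg hq]; linarith)
  calc _ ≤ p * (1 - p) * (exp |t| - 1 - |t|) + 1 := by
        nlinarith [mul_le_mul_of_nonneg_left h₁ hq, mul_le_mul_of_nonneg_left h₂ hp0]
    _ ≤ _ := add_one_le_exp _

section Bernstein

variable {Ω : Type*} [MeasurableSpace Ω] {μ : Measure Ω} [IsFiniteMeasure μ] {X : Ω → ℝ}
  {v c l : ℝ}

theorem measureReal_le_le_exp_of_mgf_le (hv : 0 < v) (hc : 0 ≤ c) (hl : 0 < l)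
    (hint : ∀ t, Integrable (fun ω => exp (t * X ω)) μ)
    (hmgf : ∀ t, 0 ≤ t → c * t < 1 → mgf X μ t ≤ exp (v * t ^ 2 / (2 * (1 - c * t)))) :
    μ.real {ω | l ≤ X ω} ≤ exp (-l ^ 2 / (2 * (v + c * l))) := by
  have hw : 0 < v + c * l := by positivity
  -- `t` minimises `-t * l + v * t ^ 2 / (2 * (1 - c * t))`
  have ht : 0 ≤ l / (v + c * l) := by positivity
  have hct : 1 - c * (l / (v + c * l)) = v / (v + c * l) := by field_simp; ring
  calc μ.real {ω | l ≤ X ω}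
      ≤ exp (-(l / (v + c * l)) * l) * mgf X μ (l / (v + c * l)) :=
        measure_ge_le_exp_mul_mgf l ht (hint _)
    _ ≤ exp (-(l / (v + c * l)) * l) *
          exp (v * (l / (v + c * l)) ^ 2 / (2 * (1 - c * (l / (v + c * l))))) := by
        gcongr
        exact hmgf _ ht (by rw [← sub_pos, hct]; positivity)
    _ = exp (-l ^ 2 / (2 * (v + c * l))) := by
        rw [← exp_add, hct]; congr 1; field_simp; ring

theorem measureReal_le_abs_le_two_mul_exp_of_mgf_le (hv : 0 < v) (hc : 0 ≤ c) (hl : 0 < l)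
    (hint : ∀ t, Integrable (fun ω => exp (t * X ω)) μ)
    (hmgf : ∀ t, c * |t| < 1 → mgf X μ t ≤ exp (v * t ^ 2 / (2 * (1 - c * |t|)))) :
    μ.real {ω | l ≤ |X ω|} ≤ 2 * exp (-l ^ 2 / (2 * (v + c * l))) := by
  have hupper := measureReal_le_le_exp_of_mgf_le hv hc hl hint fun t ht hct => by
    simpa only [abs_of_nonneg ht] using hmgf t (by rwa [abs_of_nonneg ht])
  have hlower := measureReal_le_le_exp_of_mgf_le (X := -X) hv hc hl
    (fun t => by simpa only [Pi.neg_apply, mul_neg, neg_mul] using hint (-t))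
    fun t ht hct => by
      rw [mgf_neg]
      simpa only [abs_neg, abs_of_nonneg ht, neg_sq] using
        hmgf (-t) (by rwa [abs_neg, abs_of_nonneg ht])
  have hset : {ω | l ≤ |X ω|} = {ω | l ≤ X ω} ∪ {ω | l ≤ (-X) ω} := by
    ext ω; simp [le_abs]
  rw [hset, two_mul]
  exact (measureReal_union_le _ _).trans (add_le_add hupper hlower)

end Bernstein

theorem exp_mul_sum_sub {ι : Type*} (t s : ℝ) (J : Finset ι) (f : ι → ℝ) :
    exp (t * ∑ j ∈ J, (f j - s)) = exp (-s * t) ^ #J * exp (t * ∑ j ∈ J, f j) := by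
  rw [← exp_nat_mul, ← exp_add, Finset.sum_sub_distrib, Finset.sum_const, nsmul_eq_mul]
  ring_nf

section Subdivision

variable {E : Type*} [NormedAddCommGroup E] [NormedSpace ℝ E]

theorem intervalIntegral_congr_Ioo {f g : ℝ → E} {u v : ℝ} (huv : u ≤ v)
    (hfg : EqOn f g (Ioo u v)) : ∫ x in u..v, f x = ∫ x in u..v, g x := by
  simp only [intervalIntegral.integral_of_le huv, integral_Ioc_eq_integral_Ioo]
  exact setIntegral_congr_fun measurableSet_Ioo hfg

theorem intervalIntegral_zero_one_eq_sum {f : ℝ → E} {N : ℕ} (hN : 0 < N)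
    (hf : IntervalIntegrable f volume 0 1) :
    ∫ x in 0..1, f x = (N : ℝ)⁻¹ • ∑ k ∈ Finset.range N, ∫ y in 0..1, f ((k + y) / N) := by
  have hN' : (0 : ℝ) < N := Nat.cast_pos.2 hN
  have hpiece : ∀ k : ℕ, ∫ x in (k : ℝ) / N..((k + 1 : ℕ) : ℝ) / N, f x =
      (N : ℝ)⁻¹ • ∫ y in 0..1, f ((k + y) / N) := by
    intro k
    simp_rw [add_div, add_comm ((k : ℝ) / N)]
    rw [intervalIntegral.integral_comp_div_add _ hN'.ne', inv_smul_smul₀ hN'.ne']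
    push_cast
    ring_nf
  rw [Finset.smul_sum, ← Finset.sum_congr rfl fun k _ => hpiece k,
    intervalIntegral.sum_integral_adjacent_intervals fun k hk => hf.mono_set ?_]
  · simp [hN'.ne']
  · rw [Set.uIcc_of_le (by gcongr; simp), Set.uIcc_of_le zero_le_one]
    exact Icc_subset_Icc (by positivity) ((div_le_one hN').2 (by exact_mod_cast hk))

theorem intervalIntegral_comp_fract_natCast_mul {g : ℝ → E} {N : ℕ} (hN : 0 < N)
    (hg : IntervalIntegrable (fun x => g (Int.fract (N * x))) volume 0 1) :
    ∫ x in 0..1, g (Int.fract (N * x)) = ∫ x in 0..1, g x := by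
  have hN' : (N : ℝ) ≠ 0 := Nat.cast_ne_zero.2 hN.ne'
  have hterm : ∀ k : ℕ, ∫ y in 0..1, g (Int.fract (N * ((k + y) / N))) = ∫ y in 0..1, g y :=
    fun k => intervalIntegral_congr_Ioo zero_le_one fun y hy => by
      rw [mul_div_cancel₀ _ hN', Int.fract_natCast_add,
        Int.fract_eq_self.2 ⟨hy.1.le, hy.2⟩]
  rw [intervalIntegral_zero_one_eq_sum hN hg]
  simp only [hterm, Finset.sum_const, Finset.card_range, ← Nat.cast_smul_eq_nsmul ℝ,
    inv_smul_smul₀ hN']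

end Subdivision

/-- `blockIndicator b h a j x = 1` when the base-`b` digits of `x` in positions `j + 1, …, j + h`
spell `a`, and `0` otherwise. -/
noncomputable def blockIndicator (b h a j : ℕ) (x : ℝ) : ℝ :=
  (Ico ((a : ℝ) / (b : ℝ) ^ h) (((a : ℝ) + 1) / (b : ℝ) ^ h)).indicator (fun _ => (1 : ℝ))
    (Int.fract ((b : ℝ) ^ j * x))

namespace blockIndicator

variable {b h a : ℕ}

@[fun_prop]
theorem measurable (j : ℕ) : Measurable (blockIndicator b h a j) :=
  (measurable_const.indicator measurableSet_Ico).comp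
    (measurable_fract.comp (measurable_const.mul measurable_id))

theorem abs_le_one (j : ℕ) (x : ℝ) : |blockIndicator b h a j x| ≤ 1 := by
  unfold blockIndicator
  rw [indicator_apply]
  split_ifs <;> simp

theorem add_right (j c : ℕ) (x : ℝ) :
    blockIndicator b h a (j + c) x = blockIndicator b h a j (Int.fract ((b : ℝ) ^ c * x)) := by
  have : (b : ℝ) ^ j * Int.fract ((b : ℝ) ^ c * x) =
      (b : ℝ) ^ (j + c) * x - ((b ^ j * ⌊(b : ℝ) ^ c * x⌋ : ℤ) : ℝ) := by
    rw [Int.fract]; push_cast; ring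
  rw [blockIndicator, blockIndicator, this, Int.fract_sub_intCast]

theorem zero_natCast_add_div {k : ℕ} (hk : k < b ^ h) {y : ℝ} (hy : y ∈ Ico 0 1) :
    blockIndicator b h a 0 ((k + y) / (b : ℝ) ^ h) = if k = a then 1 else 0 := by
  have hB : (0 : ℝ) < (b : ℝ) ^ h := by exact_mod_cast Nat.zero_lt_of_lt hk
  have hky : (k : ℝ) + y < (b : ℝ) ^ h :=
    lt_of_lt_of_le (by linarith [hy.2]) (by exact_mod_cast hk : (k : ℝ) + 1 ≤ (b : ℝ) ^ h)
  rw [blockIndicator, pow_zero, one_mul, indicator_apply,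
    Int.fract_eq_self.2 ⟨div_nonneg (by linarith [hy.1]) hB.le, (div_lt_one hB).2 hky⟩]
  simp only [mem_Ico, div_le_div_iff_of_pos_right hB, div_lt_div_iff_of_pos_right hB]
  congr 1
  apply propext
  constructor
  · rintro ⟨hlo, hhi⟩
    have : a < k + 1 := by exact_mod_cast (by linarith [hy.2] : (a : ℝ) < k + 1)
    have : k < a + 1 := by exact_mod_cast (by linarith [hy.1] : (k : ℝ) < a + 1)
    omega
  · rintro rfl
    constructor <;> linarith [hy.1, hy.2]

end blockIndicator

section DigitBlockIntegrals

variable {b h a : ℕ}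

theorem integrable_exp_mul_sum_blockIndicator {μ : Measure ℝ} [IsFiniteMeasure μ] (t : ℝ)
    (J : Finset ℕ) : Integrable (fun x => exp (t * ∑ j ∈ J, blockIndicator b h a j x)) μ := by
  refine (integrable_const (exp (|t| * #J))).mono'
    (Measurable.aestronglyMeasurable (by fun_prop)) (ae_of_all _ fun x => ?_)
  have hsum : |∑ j ∈ J, blockIndicator b h a j x| ≤ #J := by
    simpa using (Finset.abs_sum_le_sum_abs _ _).trans
      (Finset.sum_le_card_nsmul J _ 1 fun j _ => blockIndicator.abs_le_one j x)
  rw [norm_of_nonneg (exp_pos _).le, exp_le_exp]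
  exact (le_abs_self _).trans
    ((abs_mul _ _).trans_le (mul_le_mul_of_nonneg_left hsum (abs_nonneg t)))

theorem intervalIntegrable_exp_mul_sum_blockIndicator (t : ℝ) (J : Finset ℕ) (u v : ℝ) :
    IntervalIntegrable (fun x => exp (t * ∑ j ∈ J, blockIndicator b h a j x)) volume u v :=
  ⟨integrable_exp_mul_sum_blockIndicator t J, integrable_exp_mul_sum_blockIndicator t J⟩

theorem integral_exp_mul_sum_blockIndicator_map_add (hb : 0 < b) (t : ℝ) (J : Finset ℕ)
    (c : ℕ) :
    ∫ x in 0..1, exp (t * ∑ j ∈ J.map (addRightEmbedding c), blockIndicator b h a j x) =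
      ∫ x in 0..1, exp (t * ∑ j ∈ J, blockIndicator b h a j x) := by
  have hcomp : (fun x => exp (t * ∑ j ∈ J.map (addRightEmbedding c), blockIndicator b h a j x)) =
      fun x => exp (t * ∑ j ∈ J, blockIndicator b h a j (Int.fract (((b ^ c : ℕ) : ℝ) * x))) := by
    ext x
    simp [Finset.sum_map, blockIndicator.add_right]
  rw [hcomp]
  exact intervalIntegral_comp_fract_natCast_mul
    (g := fun y => exp (t * ∑ j ∈ J, blockIndicator b h a j y))
    (pow_pos hb c) (hcomp ▸ intervalIntegrable_exp_mul_sum_blockIndicator t _ 0 1)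

theorem integral_exp_mul_sum_blockIndicator_insert_zero (hh : 0 < h) (ha : a < b ^ h) (t : ℝ)
    (J : Finset ℕ) :
    ∫ x in 0..1, exp (t * ∑ j ∈ insert 0 (J.map (addRightEmbedding h)), blockIndicator b h a j x) =
      (((b : ℝ) ^ h)⁻¹ * exp t + (1 - ((b : ℝ) ^ h)⁻¹)) *
        ∫ x in 0..1, exp (t * ∑ j ∈ J, blockIndicator b h a j x) := by
  have hN : 0 < b ^ h := Nat.zero_lt_of_lt ha
  have hB : (0 : ℝ) < (b : ℝ) ^ h := by exact_mod_cast hN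
  have h0 : 0 ∉ J.map (addRightEmbedding h) := by simp; omega
  have hterm : ∀ k ∈ Finset.range (b ^ h),
      ∫ y in 0..1, exp (t * ∑ j ∈ insert 0 (J.map (addRightEmbedding h)),
          blockIndicator b h a j ((k + y) / ((b ^ h : ℕ) : ℝ))) =
        ((if k = a then exp t - 1 else 0) + 1) *
          ∫ x in 0..1, exp (t * ∑ j ∈ J, blockIndicator b h a j x) := by
    intro k hk
    rw [← intervalIntegral.integral_const_mul]
    refine intervalIntegral_congr_Ioo zero_le_one fun y hy => ?_
    have hfract : Int.fract ((b : ℝ) ^ h * ((k + y) / (b : ℝ) ^ h)) = y := by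
      rw [mul_div_cancel₀ _ hB.ne', Int.fract_natCast_add,
        Int.fract_eq_self.2 ⟨hy.1.le, hy.2⟩]
    simp only [Finset.sum_insert h0, Finset.sum_map, addRightEmbedding_apply, Nat.cast_pow,
      blockIndicator.add_right, hfract,
      blockIndicator.zero_natCast_add_div (Finset.mem_range.1 hk) (Ioo_subset_Ico_self hy)]
    split_ifs <;> simp [mul_add, exp_add]
  rw [intervalIntegral_zero_one_eq_sum hN (intervalIntegrable_exp_mul_sum_blockIndicator t _ 0 1),
    Finset.sum_congr rfl hterm, ← Finset.sum_mul, Finset.sum_add_distrib, Finset.sum_ite_eq',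
    if_pos (Finset.mem_range.2 ha)]
  simp only [Finset.sum_const, Finset.card_range, smul_eq_mul, Nat.cast_pow]
  field_simp
  ring

end DigitBlockIntegrals

theorem Nat.add_le_of_mod_eq_of_lt {h i j : ℕ} (hmod : i % h = j % h) (hij : i < j) :
    i + h ≤ j := by
  have := Nat.le_of_dvd (Nat.sub_pos_of_lt hij) ((Nat.modEq_iff_dvd' hij.le).1 hmod)
  omega

theorem Finset.exists_eq_map_insert_zero_map {h : ℕ} {J : Finset ℕ}
    (hJ : ∀ i ∈ J, ∀ j ∈ J, i < j → i + h ≤ j) (hne : J.Nonempty) :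
    ∃ (m : ℕ) (J' : Finset ℕ),
      J = (insert 0 (J'.map (addRightEmbedding h))).map (addRightEmbedding m) := by
  set m := J.min' hne
  have hgap : ∀ j ∈ J, j ≠ m → m + h ≤ j := fun j hj hjm =>
    hJ m (J.min'_mem hne) j hj (lt_of_le_of_ne (J.min'_le j hj) (Ne.symm hjm))
  refine ⟨m, (J.erase m).image (· - (m + h)), ?_⟩
  ext j
  simp only [Finset.mem_map, Finset.mem_insert, Finset.mem_image, Finset.mem_erase,
    addRightEmbedding_apply]
  constructor
  · intro hj
    by_cases hjm : j = m
    · exact ⟨0, Or.inl rfl, by simp [hjm]⟩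
    · have := hgap j hj hjm
      exact ⟨j - m, Or.inr ⟨j - (m + h), ⟨j, ⟨hjm, hj⟩, rfl⟩, by omega⟩, by omega⟩
  · rintro ⟨i, rfl | ⟨_, ⟨j', ⟨hj'm, hj'⟩, rfl⟩, rfl⟩, rfl⟩
    · simpa using J.min'_mem hne
    · have := hgap j' hj' hj'm
      convert hj' using 1
      omega

section DigitBlockMGF

variable {b h a : ℕ}

theorem integral_exp_mul_sum_blockIndicator (hh : 0 < h) (ha : a < b ^ h) (t : ℝ)
    {J : Finset ℕ} (hJ : ∀ i ∈ J, ∀ j ∈ J, i < j → i + h ≤ j) :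
    ∫ x in 0..1, exp (t * ∑ j ∈ J, blockIndicator b h a j x) =
      (((b : ℝ) ^ h)⁻¹ * exp t + (1 - ((b : ℝ) ^ h)⁻¹)) ^ #J := by
  have hb : 0 < b := Nat.pos_of_ne_zero fun hb => by simp [hb, hh.ne'] at ha
  induction hn : #J generalizing J with
  | zero => simp [Finset.card_eq_zero.1 hn]
  | succ n ih =>
    obtain ⟨m, J', rfl⟩ := Finset.exists_eq_map_insert_zero_map hJ
      (Finset.card_pos.1 (hn ▸ n.succ_pos))
    have h0 : 0 ∉ J'.map (addRightEmbedding h) := by simp; omega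
    have hcard : #J' = n := by
      rw [Finset.card_map, Finset.card_insert_of_notMem h0, Finset.card_map] at hn
      omega
    have hJ' : ∀ i ∈ J', ∀ j ∈ J', i < j → i + h ≤ j := fun i hi j hj hij => by
      have := hJ (i + h + m) (by simp [hi]) (j + h + m) (by simp [hj]) (by omega)
      omega
    rw [integral_exp_mul_sum_blockIndicator_map_add hb,
      integral_exp_mul_sum_blockIndicator_insert_zero hh ha, ih hJ' hcard, pow_succ']

theorem mgf_sum_blockIndicator_sub (hh : 0 < h) (ha : a < b ^ h) (t : ℝ) {J : Finset ℕ}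
    (hJ : ∀ i ∈ J, ∀ j ∈ J, i < j → i + h ≤ j) :
    mgf (fun x => ∑ j ∈ J, (blockIndicator b h a j x - ((b : ℝ) ^ h)⁻¹))
        (volume.restrict (Ioo 0 1)) t =
      ((1 - ((b : ℝ) ^ h)⁻¹) * exp (-((b : ℝ) ^ h)⁻¹ * t) +
        ((b : ℝ) ^ h)⁻¹ * exp ((1 - ((b : ℝ) ^ h)⁻¹) * t)) ^ #J := by
  set p := ((b : ℝ) ^ h)⁻¹
  have hint : ∫ x in Ioo 0 1, exp (t * ∑ j ∈ J, blockIndicator b h a j x) =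
      ∫ x in 0..1, exp (t * ∑ j ∈ J, blockIndicator b h a j x) := by
    rw [intervalIntegral.integral_of_le zero_le_one, integral_Ioc_eq_integral_Ioo]
  rw [mgf, funext fun x => exp_mul_sum_sub t p J _, integral_const_mul, hint,
    integral_exp_mul_sum_blockIndicator hh ha t hJ, ← mul_pow]
  congr 1
  rw [show (1 - p) * t = -p * t + t by ring, exp_add]
  ring

theorem mgf_sum_blockIndicator_sub_le (hh : 0 < h) (ha : a < b ^ h) {t : ℝ} (ht : |t| < 3)
    {J : Finset ℕ} (hJ : ∀ i ∈ J, ∀ j ∈ J, i < j → i + h ≤ j) :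
    mgf (fun x => ∑ j ∈ J, (blockIndicator b h a j x - ((b : ℝ) ^ h)⁻¹))
        (volume.restrict (Ioo 0 1)) t ≤
      exp (#J * (((b : ℝ) ^ h)⁻¹ * (1 - ((b : ℝ) ^ h)⁻¹)) * t ^ 2 / (2 * (1 - |t| / 3))) := by
  set p := ((b : ℝ) ^ h)⁻¹
  have hp0 : 0 ≤ p := by positivity
  have hp1 : p ≤ 1 := inv_le_one_of_one_le₀ (by exact_mod_cast Nat.zero_lt_of_lt ha)
  have hG := exp_sub_one_sub_le (abs_nonneg t) ht
  rw [sq_abs] at hG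
  rw [mgf_sum_blockIndicator_sub hh ha t hJ]
  calc _ ≤ exp (p * (1 - p) * (exp |t| - 1 - |t|)) ^ #J :=
        pow_le_pow_left₀ (add_nonneg (mul_nonneg (by linarith) (exp_pos _).le)
          (mul_nonneg hp0 (exp_pos _).le)) (centered_bernoulli_mgf_le hp0 hp1 t) _
    _ = exp (#J * (p * (1 - p)) * (exp |t| - 1 - |t|)) := by rw [← exp_nat_mul]; ring_nf
    _ ≤ _ := by
        rw [exp_le_exp, mul_div_assoc]
        gcongr

theorem measureReal_le_abs_sum_blockIndicator_sub_le (hb : 2 ≤ b) (hh : 0 < h) (ha : a < b ^ h)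
    {J : Finset ℕ} (hne : J.Nonempty) (hJ : ∀ i ∈ J, ∀ j ∈ J, i < j → i + h ≤ j) {l : ℝ}
    (hl : 0 < l) :
    (volume.restrict (Ioo (0 : ℝ) 1)).real
        {x | l ≤ |∑ j ∈ J, (blockIndicator b h a j x - ((b : ℝ) ^ h)⁻¹)|} ≤
      2 * exp (-l ^ 2 / (2 * (#J * (((b : ℝ) ^ h)⁻¹ * (1 - ((b : ℝ) ^ h)⁻¹)) + 1 / 3 * l))) := by
  set p := ((b : ℝ) ^ h)⁻¹
  have hp0 : 0 < p := by positivity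
  have hp1 : p < 1 := inv_lt_one_of_one_lt₀ (one_lt_pow₀ (by exact_mod_cast hb) hh.ne')
  refine measureReal_le_abs_le_two_mul_exp_of_mgf_le
    (mul_pos (by simpa using hne) (mul_pos hp0 (by linarith))) (by norm_num) hl
    (fun t => ((integrable_exp_mul_sum_blockIndicator t J).const_mul _).congr
      (ae_of_all _ fun x => (exp_mul_sum_sub t p J _).symm))
    fun t ht => ?_
  rw [one_div_mul_eq_div] at ht ⊢
  exact mgf_sum_blockIndicator_sub_le hh ha (by linarith) hJ

end DigitBlockMGF

theorem stmt9_general (b h a r : ℕ) (hb : 2 ≤ b) (hh : 1 ≤ h) (ha : a < b ^ h)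
    (J : Finset ℕ) (n : ℕ) (hcard : J.card = n) (hn : 0 < n)
    (hJ : ∀ j ∈ J, j % h = r) (ε : ℝ) (hε : 0 < ε) :
    MeasureTheory.volume {x ∈ Set.Ioo (0 : ℝ) 1 |
        ε * Real.sqrt n <
          |∑ j ∈ J, ((Set.Ico ((a : ℝ) / (b : ℝ) ^ h) (((a : ℝ) + 1) / (b : ℝ) ^ h)).indicator
              (fun _ => (1 : ℝ)) (Int.fract ((b : ℝ) ^ j * x)) - ((b : ℝ) ^ h)⁻¹)|} ≤
      ENNReal.ofReal (2 * Real.exp (-ε ^ 2 /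
        (2 * ((b : ℝ) ^ h)⁻¹ * (1 - ((b : ℝ) ^ h)⁻¹) + 2 / 3 * ε / Real.sqrt n))) := by
  subst hcard
  have hsqrt : 0 < √(#J : ℝ) := Real.sqrt_pos.2 (by exact_mod_cast hn)
  have htail := measureReal_le_abs_sum_blockIndicator_sub_le (a := a) hb hh ha
    (Finset.card_pos.1 hn) (fun i hi j hj => Nat.add_le_of_mod_eq_of_lt
      ((hJ i hi).trans (hJ j hj).symm)) (mul_pos hε hsqrt)
  calc _ = volume.restrict (Ioo 0 1) {x | ε * √(#J : ℝ) <
          |∑ j ∈ J, (blockIndicator b h a j x - ((b : ℝ) ^ h)⁻¹)|} := by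
        rw [Measure.restrict_apply' measurableSet_Ioo]
        exact congrArg volume (inter_comm _ _)
    _ ≤ volume.restrict (Ioo 0 1) {x | ε * √(#J : ℝ) ≤
          |∑ j ∈ J, (blockIndicator b h a j x - ((b : ℝ) ^ h)⁻¹)|} :=
        measure_mono (ofPred_subset_ofPred.2 fun _ => le_of_lt)
    _ ≤ _ := by
        rw [← ofReal_measureReal]
        refine (ENNReal.ofReal_le_ofReal htail).trans_eq ?_
        congr 3
        have hsq : (#J : ℝ) = √(#J : ℝ) ^ 2 := (sq_sqrt (Nat.cast_nonneg _)).symm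
        generalize √(#J : ℝ) = s at hsq hsqrt ⊢
        rw [hsq]
        field_simp

theorem stmt9 (b h a r : ℕ) (hb : 2 ≤ b) (hh : 1 ≤ h) (ha : a < b ^ h) (hr : r < h)
    (J : Finset ℕ) (n : ℕ) (hcard : J.card = n) (hn : 0 < n)
    (hJ : ∀ j ∈ J, j % h = r) (ε : ℝ) (hε : 0 < ε) :
    MeasureTheory.volume {x ∈ Set.Ioo (0 : ℝ) 1 |
        ε * Real.sqrt n <
          |∑ j ∈ J, ((Set.Ico ((a : ℝ) / (b : ℝ) ^ h) (((a : ℝ) + 1) / (b : ℝ) ^ h)).indicator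
              (fun _ => (1 : ℝ)) (Int.fract ((b : ℝ) ^ j * x)) - ((b : ℝ) ^ h)⁻¹)|} ≤
      ENNReal.ofReal (2 * Real.exp (-ε ^ 2 /
        (2 * ((b : ℝ) ^ h)⁻¹ * (1 - ((b : ℝ) ^ h)⁻¹) + 2 / 3 * ε / Real.sqrt n))) :=
  stmt9_general b h a r hb hh ha J n hcard hn hJ ε hε
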